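/- arXiv:2404.01101 — 3 statements merged into one kernel-verified Lean document; each statement's English description precedes it below -/
import Mathlib

section
/- Let N ≥ 1, let μ_c, μ_b : Fin N → ℝ, and let σ_c, σ_b > 0 satisfy σ_c − σ_b > 1 and σ_b ≤ N. Let x₁, x₂ be i.i.d. with law N(μ_c, σ_c²I_N) and x₃, x₄ be i.i.d. with law N(μ_b, σ_b²I_N). Then the expected pairwise distance of the clean pair strictly exceeds that of the backdoor pair: ∫∫ ‖x₁ − x₂‖ d(N(μ_c,σ_c²I_N) ⊗ N(μ_c,σ_c²I_N)) > ∫∫ ‖x₃ − x₄‖ d(N(μ_b,σ_b²I_N) ⊗ N(μ_b,σ_b²I_N)). -/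
open MeasureTheory ProbabilityTheory

/-- The isotropic Gaussian measure `N(μ, v·I_N)` on `EuclideanSpace ℝ (Fin N)`,
as the product of the coordinate Gaussians `gaussianReal (μ i) v`. -/
noncomputable def gaussianPi (N : ℕ) (μ : Fin N → ℝ) (v : NNReal) :
    Measure (EuclideanSpace ℝ (Fin N)) :=
  (Measure.pi fun i => gaussianReal (μ i) v).map
    (MeasurableEquiv.toLp 2 (Fin N → ℝ))

/-!
Since `N(μ, σ²I)` is the push-forward of the standard Gaussian under `x ↦ μ + σ x`, the expected
distance between two independent samples is `|σ|` times the same quantity `D_N` for the standard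
Gaussian. `D_N > 0` because the standard Gaussian charges every nonempty open set and `‖x - y‖` is
continuous and not identically zero when `N ≥ 1`; so the clean distance `σ_c D_N` exceeds the
backdoor distance `σ_b D_N` as soon as `σ_c > σ_b > 0`.
-/

open WithLp

namespace ProbabilityTheory

lemma isOpenPosMeasure_gaussianReal (m : ℝ) {v : NNReal} (hv : v ≠ 0) :
    (gaussianReal m v).IsOpenPosMeasure :=
  (gaussianReal_absolutelyContinuous' m hv).isOpenPosMeasure

lemma gaussianReal_map_const_add_mul (m σ : ℝ) :
    (gaussianReal 0 1).map (fun t => m + σ * t) = gaussianReal m (σ ^ 2).toNNReal := by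
  have hcomp : (fun t : ℝ => m + σ * t) = (m + ·) ∘ (σ * ·) := rfl
  rw [hcomp, ← Measure.map_map (by fun_prop) (by fun_prop), gaussianReal_map_const_mul,
    gaussianReal_map_const_add]
  congr 1
  · simp
  · ext; simp [sq_nonneg]

instance isOpenPosMeasure_stdGaussian {ι : Type*} [Fintype ι] :
    (stdGaussian (EuclideanSpace ℝ ι)).IsOpenPosMeasure := by
  have := isOpenPosMeasure_gaussianReal 0 one_ne_zero
  rw [← map_pi_eq_stdGaussian]
  exact (PiLp.continuous_toLp 2 _).isOpenPosMeasure_map (toLp_surjective 2)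

end ProbabilityTheory

lemma gaussianPi_eq_map_stdGaussian (N : ℕ) (m : Fin N → ℝ) (σ : ℝ) :
    gaussianPi N m (σ ^ 2).toNNReal =
      (stdGaussian (EuclideanSpace ℝ (Fin N))).map (fun x => toLp 2 m + σ • x) := by
  have hcomp : (fun x => toLp 2 m + σ • x) ∘ toLp 2 = toLp 2 ∘ fun x i => m i + σ * x i := rfl
  rw [gaussianPi, MeasurableEquiv.coe_toLp, ← map_pi_eq_stdGaussian,
    Measure.map_map (by fun_prop) (by fun_prop), hcomp,
    ← Measure.map_map (by fun_prop) (by fun_prop),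
    Measure.pi_map_pi (f := fun i t => m i + σ * t) fun _ => by fun_prop]
  simp_rw [gaussianReal_map_const_add_mul]

lemma integral_norm_sub_prod_map_affine {E : Type*} [NormedAddCommGroup E] [NormedSpace ℝ E]
    [MeasurableSpace E] [BorelSpace E] [SecondCountableTopology E] (ν : Measure E) [SFinite ν]
    (a : E) (σ : ℝ) :
    ∫ p : E × E, ‖p.1 - p.2‖ ∂((ν.map (fun x => a + σ • x)).prod (ν.map (fun x => a + σ • x)))
      = |σ| * ∫ p : E × E, ‖p.1 - p.2‖ ∂(ν.prod ν) := by
  have hT : Measurable fun x : E => a + σ • x := by fun_prop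
  rw [Measure.map_prod_map _ _ hT hT, integral_map (by fun_prop) (by fun_prop),
    ← integral_const_mul]
  congr with p
  simp [← smul_sub, norm_smul]

lemma integral_norm_sub_prod_pos {E : Type*} [NormedAddCommGroup E] [Nontrivial E]
    [MeasurableSpace E] (ν : Measure E) [ν.IsOpenPosMeasure] [SFinite ν]
    (hint : Integrable (fun p : E × E => ‖p.1 - p.2‖) (ν.prod ν)) :
    0 < ∫ p : E × E, ‖p.1 - p.2‖ ∂(ν.prod ν) := by
  rw [integral_pos_iff_support_of_nonneg (fun _ => norm_nonneg _) hint]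
  obtain ⟨x, hx⟩ := exists_ne (0 : E)
  refine IsOpen.measure_pos _ ?_ ⟨(x, 0), by simpa using hx⟩
  exact isOpen_compl_singleton.preimage (by fun_prop)

lemma integral_norm_sub_stdGaussian_pos {ι : Type*} [Fintype ι] [Nonempty ι] :
    0 < ∫ p : EuclideanSpace ℝ ι × EuclideanSpace ℝ ι, ‖p.1 - p.2‖
      ∂((stdGaussian (EuclideanSpace ℝ ι)).prod (stdGaussian (EuclideanSpace ℝ ι))) := by
  refine integral_norm_sub_prod_pos _ ?_
  have hid : Integrable id (stdGaussian (EuclideanSpace ℝ ι)) := IsGaussian.integrable_id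
  exact ((hid.comp_fst _).sub (hid.comp_snd _)).norm

theorem stmt_2_general (N : ℕ) (hN : 1 ≤ N) (μc μb : Fin N → ℝ) (σc σb : ℝ)
    (hσb : 0 < σb) (hgap : σc - σb > 1) :
    (∫ p : EuclideanSpace ℝ (Fin N) × EuclideanSpace ℝ (Fin N), ‖p.1 - p.2‖
        ∂((gaussianPi N μc (σc ^ 2).toNNReal).prod (gaussianPi N μc (σc ^ 2).toNNReal))) >
      (∫ p : EuclideanSpace ℝ (Fin N) × EuclideanSpace ℝ (Fin N), ‖p.1 - p.2‖
        ∂((gaussianPi N μb (σb ^ 2).toNNReal).prod (gaussianPi N μb (σb ^ 2).toNNReal))) := by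
  have : Nonempty (Fin N) := ⟨⟨0, hN⟩⟩
  simp only [gaussianPi_eq_map_stdGaussian, integral_norm_sub_prod_map_affine]
  rw [abs_of_pos hσb, abs_of_pos (by linarith)]
  exact mul_lt_mul_of_pos_right (by linarith) integral_norm_sub_stdGaussian_pos

/-- positivity conclusion of Corollary 3: if `σc − σb > 1` and `σb ≤ N`, then
the expected pairwise distance of the clean pair strictly exceeds that of the backdoor pair. -/
theorem stmt_2 (N : ℕ) (hN : 1 ≤ N) (μc μb : Fin N → ℝ) (σc σb : ℝ)
    (hσc : 0 < σc) (hσb : 0 < σb) (hgap : σc - σb > 1) (hlin : σb ≤ (N : ℝ)) :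
    (∫ p : EuclideanSpace ℝ (Fin N) × EuclideanSpace ℝ (Fin N), ‖p.1 - p.2‖
        ∂((gaussianPi N μc (σc ^ 2).toNNReal).prod (gaussianPi N μc (σc ^ 2).toNNReal))) >
      (∫ p : EuclideanSpace ℝ (Fin N) × EuclideanSpace ℝ (Fin N), ‖p.1 - p.2‖
        ∂((gaussianPi N μb (σb ^ 2).toNNReal).prod (gaussianPi N μb (σb ^ 2).toNNReal))) :=
  stmt_2_general N hN μc μb σc σb hσb hgap
end

section
/- Let 0 < α < 1 and 0 < ᾱ' < 1, set β = 1 − α and ᾱ = α·ᾱ', and let ρ > 0. Then for all real x₀, x_t and x: gaussianPDFReal(√α·x, ρ²·β)(x_t) · gaussianPDFReal(√ᾱ'·x₀, ρ²·(1 − ᾱ'))(x) = gaussianPDFReal(μ̃, σ̃²)(x) · gaussianPDFReal(√ᾱ·x₀, ρ²·(1 − ᾱ))(x_t), where μ̃ = (√α·(1 − ᾱ')·x_t + √ᾱ'·β·x₀)/(1 − ᾱ) and σ̃² = ρ²·β·(1 − ᾱ')/(1 − ᾱ). -/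
/-!
Bayes' rule for a linear-Gaussian model: for a prior `N(m, w)` on `x` and a likelihood
`N(a x, v)` of `y`, completing the square in `x` splits the sum of the two exponents into the
posterior exponent `(x - μ̃)² / σ̃²` plus the marginal one `(y - a m)² / (v + a² w)`, and
the normalizing constants agree because `v w = σ̃² (v + a² w)`. The DDPM identity is the case
`a = √α`, `v = ρ²β`, `w = ρ²(1 - ᾱ')`, where `v + a² w = ρ²(1 - ᾱ)` and `a √ᾱ' = √ᾱ`.
-/

open MeasureTheory ProbabilityTheory Real

theorem gaussianPDFReal_mul_gaussianPDFReal {v w : ℝ} (hv : 0 ≤ v) (hw : 0 ≤ w)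
    (μ ν x y : ℝ) :
    gaussianPDFReal μ v.toNNReal x * gaussianPDFReal ν w.toNNReal y =
      (2 * π * √(v * w))⁻¹ * exp (-((x - μ) ^ 2 / v + (y - ν) ^ 2 / w) / 2) := by
  simp only [gaussianPDFReal, Real.coe_toNNReal _ hv, Real.coe_toNNReal _ hw]
  have hsqrt : √(2 * π * v) * √(2 * π * w) = 2 * π * √(v * w) := by
    rw [← Real.sqrt_mul (by positivity),
      show 2 * π * v * (2 * π * w) = (2 * π) ^ 2 * (v * w) by ring,
      Real.sqrt_mul (by positivity), Real.sqrt_sq (by positivity)]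
  rw [← hsqrt, mul_inv]
  calc _ = (√(2 * π * v))⁻¹ * (√(2 * π * w))⁻¹ *
        exp (-(x - μ) ^ 2 / (2 * v) + -(y - ν) ^ 2 / (2 * w)) := by rw [exp_add]; ring
    _ = _ := by congr 2; ring

theorem gaussianPDFReal_mul_gaussianPDFReal_eq_posterior_mul_marginal {v w : ℝ} (hv : 0 < v)
    (hw : 0 < w) (a m x y : ℝ) :
    gaussianPDFReal (a * x) v.toNNReal y * gaussianPDFReal m w.toNNReal x =
      gaussianPDFReal ((a * w * y + v * m) / (v + a ^ 2 * w))
          (v * w / (v + a ^ 2 * w)).toNNReal x *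
        gaussianPDFReal (a * m) (v + a ^ 2 * w).toNNReal y := by
  have hs : 0 < v + a ^ 2 * w := by positivity
  rw [gaussianPDFReal_mul_gaussianPDFReal hv.le hw.le,
    gaussianPDFReal_mul_gaussianPDFReal (by positivity) hs.le]
  congr 4
  · field_simp
  · field_simp
    ring

theorem stmt_10_general (α αbar' : ℝ) (hα : 0 < α) (hα1 : α < 1)
    (hαbar'1 : αbar' < 1)
    (β αbar : ℝ) (hβ : β = 1 - α) (hαbar : αbar = α * αbar')
    (ρ : ℝ) (hρ : 0 < ρ) (x₀ xt x : ℝ) :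
    gaussianPDFReal (Real.sqrt α * x) (ρ ^ 2 * β).toNNReal xt *
        gaussianPDFReal (Real.sqrt αbar' * x₀) (ρ ^ 2 * (1 - αbar')).toNNReal x =
      gaussianPDFReal
          ((Real.sqrt α * (1 - αbar') * xt + Real.sqrt αbar' * β * x₀) / (1 - αbar))
          (ρ ^ 2 * β * (1 - αbar') / (1 - αbar)).toNNReal x *
        gaussianPDFReal (Real.sqrt αbar * x₀) (ρ ^ 2 * (1 - αbar)).toNNReal xt := by
  have hv : 0 < ρ ^ 2 * β := by rw [hβ]; nlinarith [sq_pos_of_pos hρ]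
  have hw : 0 < ρ ^ 2 * (1 - αbar') := mul_pos (by positivity) (by linarith)
  have hsq : √α ^ 2 = α := Real.sq_sqrt hα.le
  have hmarginal : ρ ^ 2 * β + √α ^ 2 * (ρ ^ 2 * (1 - αbar')) = ρ ^ 2 * (1 - αbar) := by
    rw [hsq, hβ, hαbar]; ring
  have hαbar1 : 1 - αbar ≠ 0 := by
    intro h; rw [h, mul_zero] at hmarginal; nlinarith
  have key := gaussianPDFReal_mul_gaussianPDFReal_eq_posterior_mul_marginal hv hw
    (√α) (√αbar' * x₀) x xt
  have hroot : √α * (√αbar' * x₀) = √αbar * x₀ := by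
    rw [← mul_assoc, ← Real.sqrt_mul hα.le, ← hαbar]
  rw [hmarginal, hroot] at key
  have hmean : (√α * (ρ ^ 2 * (1 - αbar')) * xt + ρ ^ 2 * β * (√αbar' * x₀)) /
      (ρ ^ 2 * (1 - αbar)) = (√α * (1 - αbar') * xt + √αbar' * β * x₀) / (1 - αbar) := by
    field_simp
  have hvar : ρ ^ 2 * β * (ρ ^ 2 * (1 - αbar')) / (ρ ^ 2 * (1 - αbar))
      = ρ ^ 2 * β * (1 - αbar') / (1 - αbar) := by
    field_simp
  rwa [hmean, hvar] at key

/-- the Bayes density identity of the DDPM reverse step (at noise scale `ρ`):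
`q(x_t | x_{t−1}) · q(x_{t−1} | x₀) = q(x_{t−1} | x_t, x₀) · q(x_t | x₀)` where the reverse
kernel is Gaussian with mean `μ̃ = (√α(1−ᾱ')x_t + √ᾱ'βx₀)/(1−ᾱ)` and variance
`σ̃² = ρ²β(1−ᾱ')/(1−ᾱ)`. -/
theorem stmt_10 (α αbar' : ℝ) (hα : 0 < α) (hα1 : α < 1)
    (hαbar' : 0 < αbar') (hαbar'1 : αbar' < 1)
    (β αbar : ℝ) (hβ : β = 1 - α) (hαbar : αbar = α * αbar')
    (ρ : ℝ) (hρ : 0 < ρ) (x₀ xt x : ℝ) :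
    gaussianPDFReal (Real.sqrt α * x) (ρ ^ 2 * β).toNNReal xt *
        gaussianPDFReal (Real.sqrt αbar' * x₀) (ρ ^ 2 * (1 - αbar')).toNNReal x =
      gaussianPDFReal
          ((Real.sqrt α * (1 - αbar') * xt + Real.sqrt αbar' * β * x₀) / (1 - αbar))
          (ρ ^ 2 * β * (1 - αbar') / (1 - αbar)).toNNReal x *
        gaussianPDFReal (Real.sqrt αbar * x₀) (ρ ^ 2 * (1 - αbar)).toNNReal xt :=
  stmt_10_general α αbar' hα hα1 hαbar'1 β αbar hβ hαbar ρ hρ x₀ xt x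
end

section
/- Let 0 < α ≤ 1 and 0 < ᾱ' ≤ 1, set β = 1 − α and ᾱ = α·ᾱ', and let x₀, δ, c', k ∈ ℝ. Then the pushforward of gaussianReal(√ᾱ'·x₀ + c'·δ, 1 − ᾱ') ⊗ gaussianReal(0, 1) under the map (x, e) ↦ √α·x + k·δ + √β·e equals gaussianReal(√ᾱ·x₀ + (√α·c' + k)·δ, 1 − ᾱ). In particular, if √α·c' + k = √(1 − ᾱ), the resulting law is gaussianReal(√ᾱ·x₀ + √(1 − ᾱ)·δ, 1 − ᾱ). -/
open MeasureTheory ProbabilityTheory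
open scoped NNReal

lemma gaussianReal_prod_map_affine (m₁ m₂ : ℝ) (v₁ v₂ : ℝ≥0) (a b c : ℝ) :
    ((gaussianReal m₁ v₁).prod (gaussianReal m₂ v₂)).map
        (fun p : ℝ × ℝ => a * p.1 + b + c * p.2) =
      gaussianReal (a * m₁ + c * m₂ + b)
        (.mk (a ^ 2) (sq_nonneg _) * v₁ + .mk (c ^ 2) (sq_nonneg _) * v₂) := by
  have hfactor : (fun p : ℝ × ℝ => a * p.1 + b + c * p.2) =
      (· + b) ∘ (fun p : ℝ × ℝ => p.1 + p.2) ∘ Prod.map (a * ·) (c * ·) := by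
    funext p
    simp only [Function.comp_apply, Prod.map_fst, Prod.map_snd]
    ring
  rw [hfactor, ← Measure.map_map (by fun_prop) (by fun_prop),
    ← Measure.map_map (by fun_prop) (by fun_prop),
    ← Measure.map_prod_map _ _ (by fun_prop) (by fun_prop),
    gaussianReal_map_const_mul, gaussianReal_map_const_mul, ← Measure.conv,
    gaussianReal_conv_gaussianReal, gaussianReal_map_add_const]

theorem stmt_12_general (α αbar' : ℝ) (hα : 0 < α) (hα1 : α ≤ 1)
    (hαbar'1 : αbar' ≤ 1)
    (β αbar : ℝ) (hβ : β = 1 - α) (hαbar : αbar = α * αbar')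
    (x₀ δ c' k : ℝ) :
    ((gaussianReal (Real.sqrt αbar' * x₀ + c' * δ) (1 - αbar').toNNReal).prod
          (gaussianReal 0 1)).map
          (fun p : ℝ × ℝ => Real.sqrt α * p.1 + k * δ + Real.sqrt β * p.2) =
        gaussianReal (Real.sqrt αbar * x₀ + (Real.sqrt α * c' + k) * δ)
          (1 - αbar).toNNReal ∧
      (Real.sqrt α * c' + k = Real.sqrt (1 - αbar) →
        ((gaussianReal (Real.sqrt αbar' * x₀ + c' * δ) (1 - αbar').toNNReal).prod
            (gaussianReal 0 1)).map
            (fun p : ℝ × ℝ => Real.sqrt α * p.1 + k * δ + Real.sqrt β * p.2) =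
          gaussianReal (Real.sqrt αbar * x₀ + Real.sqrt (1 - αbar) * δ)
            (1 - αbar).toNNReal) := by
  have hmean : Real.sqrt α * (Real.sqrt αbar' * x₀ + c' * δ) + Real.sqrt β * 0 + k * δ =
      Real.sqrt αbar * x₀ + (Real.sqrt α * c' + k) * δ := by
    rw [hαbar, Real.sqrt_mul hα.le]
    ring
  have hvar : (.mk (Real.sqrt α ^ 2) (sq_nonneg _) * (1 - αbar').toNNReal +
      .mk (Real.sqrt β ^ 2) (sq_nonneg _) * 1 : ℝ≥0) = (1 - αbar).toNNReal := by
    apply NNReal.coe_injective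
    simp only [NNReal.coe_add, NNReal.coe_mul, NNReal.coe_mk, NNReal.coe_one,
      Real.sq_sqrt hα.le, Real.sq_sqrt (by linarith : (0 : ℝ) ≤ β),
      Real.coe_toNNReal _ (by linarith : (0 : ℝ) ≤ 1 - αbar')]
    rw [Real.coe_toNNReal _ (by rw [hαbar]; nlinarith), hβ, hαbar]
    ring
  have hstep := gaussianReal_prod_map_affine (Real.sqrt αbar' * x₀ + c' * δ) 0
    (1 - αbar').toNNReal 1 (Real.sqrt α) (k * δ) (Real.sqrt β)
  rw [hmean, hvar] at hstep
  exact ⟨hstep, fun htrigger => htrigger ▸ hstep⟩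

/-- one-step propagation of the backdoor forward marginal: the pushforward of
`N(√ᾱ'·x₀ + c'·δ, 1−ᾱ') ⊗ N(0, 1)` under `(x, e) ↦ √α·x + k·δ + √β·e` equals
`N(√ᾱ·x₀ + (√α·c' + k)·δ, 1−ᾱ)`; in particular, if `√α·c' + k = √(1−ᾱ)`, the resulting
law is `N(√ᾱ·x₀ + √(1−ᾱ)·δ, 1−ᾱ)`. -/
theorem stmt_12 (α αbar' : ℝ) (hα : 0 < α) (hα1 : α ≤ 1)
    (hαbar' : 0 < αbar') (hαbar'1 : αbar' ≤ 1)
    (β αbar : ℝ) (hβ : β = 1 - α) (hαbar : αbar = α * αbar')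
    (x₀ δ c' k : ℝ) :
    ((gaussianReal (Real.sqrt αbar' * x₀ + c' * δ) (1 - αbar').toNNReal).prod
          (gaussianReal 0 1)).map
          (fun p : ℝ × ℝ => Real.sqrt α * p.1 + k * δ + Real.sqrt β * p.2) =
        gaussianReal (Real.sqrt αbar * x₀ + (Real.sqrt α * c' + k) * δ)
          (1 - αbar).toNNReal ∧
      (Real.sqrt α * c' + k = Real.sqrt (1 - αbar) →
        ((gaussianReal (Real.sqrt αbar' * x₀ + c' * δ) (1 - αbar').toNNReal).prod
            (gaussianReal 0 1)).map
            (fun p : ℝ × ℝ => Real.sqrt α * p.1 + k * δ + Real.sqrt β * p.2) =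
          gaussianReal (Real.sqrt αbar * x₀ + Real.sqrt (1 - αbar) * δ)
            (1 - αbar).toNNReal) :=
  stmt_12_general α αbar' hα hα1 hαbar'1 β αbar hβ hαbar x₀ δ c' k
end
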